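/- Over a field F of characteristic ≠ 2 (e.g., ℚ or ℤ_p with p odd), let B = Λ(y₃) ⊗ F⟨t, x₃⟩/R where deg y₃ = deg x₃ = 3, deg t = 1, y₃ is central, and R is the ideal generated by t² and x₃². Then, setting w₃ = x₃t − tx₃ (the graded commutator, which here equals x₃t + tx₃ up to sign conventions), the elements w₃^k t^{ε_t} x₃^ε y₃^η with k ∈ ℕ and ε_t, ε, η ∈ {0,1} form an F-vector space basis of B. -/
import Mathlib


/-!
The algebra `B = Λ(y₃) ⊗ F⟨t,x₃⟩/(t², x₃²)` over a field `F`: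
quotient of the free noncommutative algebra on three generators
(`0 ↦ t` of degree 1, `1 ↦ x₃` of degree 3, `2 ↦ y₃` of degree 3)
by the relations `t² = x₃² = 0`, `y₃² = 0` and `y₃` central.
-/

noncomputable section
open FreeAlgebra

variable (F : Type) [Field F]

inductive CRel (F : Type) [Field F] :
    FreeAlgebra F (Fin 3) → FreeAlgebra F (Fin 3) → Prop
  | t2 : CRel F (ι F 0 * ι F 0) 0
  | x2 : CRel F (ι F 1 * ι F 1) 0
  | y2 : CRel F (ι F 2 * ι F 2) 0
  | yt : CRel F (ι F 2 * ι F 0) (ι F 0 * ι F 2)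
  | yx : CRel F (ι F 2 * ι F 1) (ι F 1 * ι F 2)

abbrev B (F : Type) [Field F] := RingQuot (CRel F)

def t : B F := RingQuot.mkAlgHom F (CRel F) (ι F 0)
def x : B F := RingQuot.mkAlgHom F (CRel F) (ι F 1)
def y : B F := RingQuot.mkAlgHom F (CRel F) (ι F 2)
/-- the (graded) commutator `w₃ = x₃t - tx₃` -/
def w : B F := x F * t F - t F * x F

/-- the basis elements `w₃^k t^{ε_t} x₃^ε y₃^η` -/
def bElt : ℕ × Bool × Bool × Bool → B F := fun ⟨k, et, ex, ey⟩ =>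
  w F ^ k * (if et then t F else 1) * (if ex then x F else 1) *
    (if ey then y F else 1)

/-! ### Relations in `B` -/

lemma htt : t F * t F = 0 := by
  simpa [t, map_mul] using RingQuot.mkAlgHom_rel F (CRel.t2 (F := F))
lemma hxx : x F * x F = 0 := by
  simpa [x, map_mul] using RingQuot.mkAlgHom_rel F (CRel.x2 (F := F))
lemma hyy : y F * y F = 0 := by
  simpa [y, map_mul] using RingQuot.mkAlgHom_rel F (CRel.y2 (F := F))
lemma hyt : y F * t F = t F * y F := by
  simpa [t, y, map_mul] using RingQuot.mkAlgHom_rel F (CRel.yt (F := F))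
lemma hyx : y F * x F = x F * y F := by
  simpa [x, y, map_mul] using RingQuot.mkAlgHom_rel F (CRel.yx (F := F))

lemma htt2 (z : B F) : t F * (t F * z) = 0 := by rw [← mul_assoc, htt, zero_mul]
lemma hxx2 (z : B F) : x F * (x F * z) = 0 := by rw [← mul_assoc, hxx, zero_mul]
lemma hyy2 (z : B F) : y F * (y F * z) = 0 := by rw [← mul_assoc, hyy, zero_mul]
lemma hyt2 (z : B F) : y F * (t F * z) = t F * (y F * z) := by
  rw [← mul_assoc, hyt, mul_assoc]
lemma hyx2 (z : B F) : y F * (x F * z) = x F * (y F * z) := by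
  rw [← mul_assoc, hyx, mul_assoc]
lemma hxt1 : x F * t F = w F + t F * x F := by rw [w, sub_add_cancel]
lemma hxt2 (z : B F) : x F * (t F * z) = w F * z + t F * (x F * z) := by
  rw [← mul_assoc, hxt1, add_mul, mul_assoc]
lemma hmulneg (a b : B F) : a * -b = -(a * b) := mul_neg a b
lemma hnegmul (a b : B F) : -a * b = -(a * b) := neg_mul a b

lemma htw1 : t F * w F = -(w F * t F) := by
  simp [w, mul_sub, sub_mul, mul_assoc, htt, htt2]
lemma htw2 (z : B F) : t F * (w F * z) = -(w F * (t F * z)) := by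
  rw [← mul_assoc, htw1, hnegmul, mul_assoc]

/-! ### Multiplication of basis elements by generators -/

lemma A1 (k : ℕ) (ey : Bool) :
    bElt F (k, false, false, ey) * t F = bElt F (k, true, false, ey) := by
  cases ey <;> simp [bElt, mul_assoc, hyt]
lemma A2 (k : ℕ) (ey : Bool) : bElt F (k, true, false, ey) * t F = 0 := by
  cases ey <;> simp [bElt, mul_assoc, hyt, htt, htt2]
lemma A3 (k : ℕ) (ey : Bool) : bElt F (k, false, true, ey) * t F =
    bElt F (k + 1, false, false, ey) + bElt F (k, true, true, ey) := by
  cases ey <;> simp [bElt, mul_assoc, hyt, hxt1, hxt2, pow_succ, mul_add]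
lemma A4 (k : ℕ) (ey : Bool) : bElt F (k, true, true, ey) * t F =
    -bElt F (k + 1, true, false, ey) := by
  cases ey <;>
    simp [bElt, mul_assoc, hyt, hxt1, hxt2, htw1, htw2, htt, htt2, pow_succ, mul_add, hmulneg]
lemma B1 (k : ℕ) (et ey : Bool) :
    bElt F (k, et, false, ey) * x F = bElt F (k, et, true, ey) := by
  cases et <;> cases ey <;> simp [bElt, mul_assoc, hyx]
lemma B2 (k : ℕ) (et ey : Bool) : bElt F (k, et, true, ey) * x F = 0 := by
  cases et <;> cases ey <;> simp [bElt, mul_assoc, hyx, hxx, hxx2]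
lemma C1 (k : ℕ) (et ex : Bool) :
    bElt F (k, et, ex, false) * y F = bElt F (k, et, ex, true) := by
  cases et <;> cases ex <;> simp [bElt, mul_assoc]
lemma C2 (k : ℕ) (et ex : Bool) : bElt F (k, et, ex, true) * y F = 0 := by
  cases et <;> cases ex <;> simp [bElt, mul_assoc, hyy, hyy2]

/-! ### The left regular representation on `(ℕ × Bool × Bool × Bool) →₀ F` -/

abbrev I3 := ℕ × Bool × Bool × Bool
abbrev V (F : Type) [Field F] := I3 →₀ F

def fT : I3 → V F := fun ⟨k, et, ex, ey⟩ =>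
  if et then 0 else Finsupp.single (k, true, ex, ey) ((-1 : F) ^ k)

def fX : I3 → V F := fun ⟨k, et, ex, ey⟩ =>
  match et, ex with
  | false, false => Finsupp.single (k, false, true, ey) ((-1 : F) ^ k)
  | false, true => 0
  | true, false => Finsupp.single (k + 1, false, false, ey) ((-1 : F) ^ k)
      + Finsupp.single (k, true, true, ey) ((-1 : F) ^ k)
  | true, true => Finsupp.single (k + 1, false, true, ey) ((-1 : F) ^ k)

def fY : I3 → V F := fun ⟨k, et, ex, ey⟩ =>
  if ey then 0 else Finsupp.single (k, et, ex, true) (1 : F)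

def TL : Module.End F (V F) := Finsupp.linearCombination F (fT F)
def XL : Module.End F (V F) := Finsupp.linearCombination F (fX F)
def YL : Module.End F (V F) := Finsupp.linearCombination F (fY F)

lemma TL_single (i : I3) (c : F) : TL F (Finsupp.single i c) = c • fT F i :=
  Finsupp.linearCombination_single F c i
lemma XL_single (i : I3) (c : F) : XL F (Finsupp.single i c) = c • fX F i :=
  Finsupp.linearCombination_single F c i
lemma YL_single (i : I3) (c : F) : YL F (Finsupp.single i c) = c • fY F i :=
  Finsupp.linearCombination_single F c i

lemma TT : TL F * TL F = 0 := by
  apply Finsupp.lhom_ext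
  rintro ⟨k, et, ex, ey⟩ b
  cases et <;>
    simp [-Finsupp.single_mul, Module.End.mul_apply, TL_single, fT, Finsupp.smul_single]

lemma XX : XL F * XL F = 0 := by
  apply Finsupp.lhom_ext
  rintro ⟨k, et, ex, ey⟩ b
  cases et <;> cases ex <;>
    simp [-Finsupp.single_mul, Module.End.mul_apply, XL_single, fX, Finsupp.smul_single,
      smul_add, smul_smul, pow_succ, ← Finsupp.single_add]

lemma YY : YL F * YL F = 0 := by
  apply Finsupp.lhom_ext
  rintro ⟨k, et, ex, ey⟩ b
  cases ey <;> simp [-Finsupp.single_mul, Module.End.mul_apply, YL_single, fY, Finsupp.smul_single]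

lemma YT : YL F * TL F = TL F * YL F := by
  apply Finsupp.lhom_ext
  rintro ⟨k, et, ex, ey⟩ b
  cases et <;> cases ey <;>
    simp [-Finsupp.single_mul, Module.End.mul_apply, YL_single, TL_single, fY, fT,
      Finsupp.smul_single, smul_smul, mul_comm]

lemma YX : YL F * XL F = XL F * YL F := by
  apply Finsupp.lhom_ext
  rintro ⟨k, et, ex, ey⟩ b
  cases et <;> cases ex <;> cases ey <;>
    simp [-Finsupp.single_mul, Module.End.mul_apply, YL_single, XL_single, fY, fX,
      Finsupp.smul_single, smul_add, smul_smul, mul_comm]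

lemma Wone (k : ℕ) (a b c : Bool) :
    (XL F * TL F - TL F * XL F) (Finsupp.single (k, a, b, c) (1 : F)) =
      Finsupp.single (k + 1, a, b, c) (1 : F) := by
  cases a <;> cases b <;>
    simp [-Finsupp.single_mul, Module.End.mul_apply, LinearMap.sub_apply, TL_single, XL_single,
      fT, fX, Finsupp.smul_single, smul_add, smul_smul, pow_succ, ← Finsupp.single_add,
      Finsupp.single_neg] <;> ring_nf <;>
    rw [show ((-1 : F)) ^ (k * 2) = 1 from Even.neg_one_pow ⟨k, by ring⟩]

lemma Wpow (k n : ℕ) (a b c : Bool) :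
    ((XL F * TL F - TL F * XL F) ^ k) (Finsupp.single (n, a, b, c) (1 : F)) =
      Finsupp.single (n + k, a, b, c) (1 : F) := by
  induction k generalizing n with
  | zero => simp
  | succ k ih =>
      rw [pow_succ', Module.End.mul_apply, ih, Wone, Nat.add_assoc]

/-! ### The algebra map `B → End V` -/

def g3 : Fin 3 → Module.End F (V F) := ![TL F, XL F, YL F]

lemma hrel : ∀ ⦃a b : FreeAlgebra F (Fin 3)⦄, CRel F a b →
    FreeAlgebra.lift F (g3 F) a = FreeAlgebra.lift F (g3 F) b := by
  rintro a b h
  cases h <;>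
    simp [g3, FreeAlgebra.lift_ι_apply, TT, XX, YY, YT, YX]

def phi : B F →ₐ[F] Module.End F (V F) :=
  RingQuot.liftAlgHom F ⟨FreeAlgebra.lift F (g3 F), hrel F⟩

lemma phi_t : phi F (t F) = TL F := by
  simp [phi, t, RingQuot.liftAlgHom_mkAlgHom_apply, FreeAlgebra.lift_ι_apply, g3]
lemma phi_x : phi F (x F) = XL F := by
  simp [phi, x, RingQuot.liftAlgHom_mkAlgHom_apply, FreeAlgebra.lift_ι_apply, g3]
lemma phi_y : phi F (y F) = YL F := by
  simp [phi, y, RingQuot.liftAlgHom_mkAlgHom_apply, FreeAlgebra.lift_ι_apply, g3]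
lemma phi_w : phi F (w F) = XL F * TL F - TL F * XL F := by
  simp [w, map_sub, map_mul, phi_t, phi_x]

def e0 : V F := Finsupp.single (0, false, false, false) (1 : F)

def L : B F →ₗ[F] V F where
  toFun b := phi F b (e0 F)
  map_add' a b := by simp [map_add]
  map_smul' a b := by simp [map_smul]

lemma key (i : I3) : L F (bElt F i) = Finsupp.single i (1 : F) := by
  obtain ⟨k, et, ex, ey⟩ := i
  cases et <;> cases ex <;> cases ey <;>
    simp [-Finsupp.single_mul, L, bElt, map_mul, map_pow, phi_w, phi_t, phi_x, phi_y,
      map_one, Module.End.mul_apply, Module.End.one_apply, e0, TL_single, XL_single, YL_single,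
      fT, fX, fY, Finsupp.smul_single, smul_add, Wpow, pow_zero, one_smul, zero_add]

/-! ### Spanning -/

def S (F : Type) [Field F] : Submodule F (B F) := Submodule.span F (Set.range (bElt F))

lemma memS (i : I3) : bElt F i ∈ S F := Submodule.subset_span ⟨i, rfl⟩

lemma mul_t_mem : ∀ s ∈ S F, s * t F ∈ S F := by
  intro s hs
  induction hs using Submodule.span_induction with
  | mem v hv =>
      obtain ⟨⟨k, et, ex, ey⟩, rfl⟩ := hv
      cases et <;> cases ex
      · rw [A1]; exact memS F _
      · rw [A3]; exact add_mem (memS F _) (memS F _)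
      · rw [A2]; exact zero_mem _
      · rw [A4]; exact neg_mem (memS F _)
  | zero => rw [zero_mul]; exact zero_mem _
  | add u v hu hv ihu ihv => rw [add_mul]; exact add_mem ihu ihv
  | smul a u hu ihu => rw [smul_mul_assoc]; exact Submodule.smul_mem _ a ihu

lemma mul_x_mem : ∀ s ∈ S F, s * x F ∈ S F := by
  intro s hs
  induction hs using Submodule.span_induction with
  | mem v hv =>
      obtain ⟨⟨k, et, ex, ey⟩, rfl⟩ := hv
      cases ex
      · rw [B1]; exact memS F _
      · rw [B2]; exact zero_mem _
  | zero => rw [zero_mul]; exact zero_mem _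
  | add u v hu hv ihu ihv => rw [add_mul]; exact add_mem ihu ihv
  | smul a u hu ihu => rw [smul_mul_assoc]; exact Submodule.smul_mem _ a ihu

lemma mul_y_mem : ∀ s ∈ S F, s * y F ∈ S F := by
  intro s hs
  induction hs using Submodule.span_induction with
  | mem v hv =>
      obtain ⟨⟨k, et, ex, ey⟩, rfl⟩ := hv
      cases ey
      · rw [C1]; exact memS F _
      · rw [C2]; exact zero_mem _
  | zero => rw [zero_mul]; exact zero_mem _
  | add u v hu hv ihu ihv => rw [add_mul]; exact add_mem ihu ihv
  | smul a u hu ihu => rw [smul_mul_assoc]; exact Submodule.smul_mem _ a ihu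

lemma one_memS : (1 : B F) ∈ S F := by
  have h : bElt F (0, false, false, false) = 1 := by simp [bElt]
  exact h ▸ memS F _

lemma span_top : S F = ⊤ := by
  rw [eq_top_iff]
  rintro b -
  obtain ⟨a, rfl⟩ := RingQuot.mkAlgHom_surjective F (CRel F) b
  have main : ∀ s ∈ S F, s * RingQuot.mkAlgHom F (CRel F) a ∈ S F := by
    induction a using FreeAlgebra.induction with
    | grade0 r =>
        intro s hs
        rw [AlgHom.commutes, ← Algebra.commutes, ← Algebra.smul_def]
        exact Submodule.smul_mem _ r hs
    | grade1 i =>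
        fin_cases i
        · exact mul_t_mem F
        · exact mul_x_mem F
        · exact mul_y_mem F
    | mul a b iha ihb =>
        intro s hs
        rw [map_mul, ← mul_assoc]
        exact ihb _ (iha _ hs)
    | add a b iha ihb =>
        intro s hs
        rw [map_add, mul_add]
        exact add_mem (iha s hs) (ihb s hs)
  simpa using main 1 (one_memS F)

/-- over a field of characteristic ≠ 2, the elements
`w₃^k t^{ε_t} x₃^ε y₃^η` (`k ∈ ℕ`, `ε_t, ε, η ∈ {0,1}`) form an `F`-vector
space basis of `B = Λ(y₃) ⊗ F⟨t,x₃⟩/(t²,x₃²)`. -/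
theorem stmt_13 (hchar : ringChar F ≠ 2) :
    LinearIndependent F (bElt F) ∧
    Submodule.span F (Set.range (bElt F)) = ⊤ := by
  constructor
  · have hli : LinearIndependent F (fun i : I3 => Finsupp.single i (1 : F)) := by
      have h := (Finsupp.basisSingleOne (R := F) (ι := I3)).linearIndependent
      simpa [Finsupp.coe_basisSingleOne] using h
    have hcomp : LinearIndependent F (L F ∘ bElt F) := by
      have hfun : (L F ∘ bElt F) = fun i : I3 => Finsupp.single i (1 : F) :=
        funext fun i => key F i
      rw [hfun]; exact hli
    exact LinearIndependent.of_comp (L F) hcomp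
  · exact span_top F
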